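/- arXiv:1907.01543 — 3 statements merged into one kernel-verified Lean document; each statement's English description precedes it below -/
import Mathlib

section
/- In the setting of the DIAG iteration (𝒴 ⊆ ℝ^q nonempty compact convex with diameter D_𝒴, g : ℝ^p × 𝒴 → ℝ L-smooth, g(·,y) σ-strongly convex for every y with 0 < σ ≤ L, g(x,·) concave for every x, β = 2L²/σ, z₀ = y₀, and for each k: τ_k = 2/(k+2), η_k = (k+1)/(2β), w_k = (1 − τ_k) y_k + τ_k z_k, g(x_{k+1}, y_{k+1}) ≤ min_x g(x, y_{k+1}) + ε_step^{(k+1)}, y_{k+1} = P_𝒴(w_k + (1/β)∇_y g(x_{k+1}, w_k)), z_{k+1} = P_𝒴(z_k + η_k ∇_y g(x_{k+1}, w_k)), x̄_K = (2/(K(K+1))) Σ_{i=1}^{K} i·x_i), if the tolerances are chosen as ε_step^{(k)} = L² D_𝒴² / (σ k³ (k+1)), then for every K ≥ 1, max_{ỹ ∈ 𝒴} g(x̄_K, ỹ) − min_{x̃ ∈ ℝ^p} g(x̃, y_K) ≤ 6 (L²/σ) D_𝒴² / (K(K+1)). -/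
/-!
Let `h y = ⨅ x, g (x, y)`; strong convexity in `x` makes this infimum finite. For fixed `k` the
update of `(y, z)` is one step of accelerated projected gradient ascent (with momentum weight
`τ_k = 2/(k+2)`) on the concave function `g (x_{k+1}, ·)`, whose gradient is `L`-Lipschitz. With
`A_k = k(k+1)/2` the usual estimate-sequence argument gives, for every `u ∈ 𝒴`,
`∑_{i ≤ K} i g(x_i, u) - β‖u - z₀‖² - ∑_{i ≤ K} A_i ε_i ≤ A_K h(y_K)`,
the inexact inner minimisation entering only through `g(x_i, y_i) ≤ h(y_i) + ε_i`.
Jensen's inequality for the convex function `g (·, u)` bounds the left sum below by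
`A_K g(x̄_K, u)`; with the chosen tolerances `∑ A_i ε_i = (L²D²/2σ) ∑ 1/i² ≤ L²D²/σ`, and since
`β‖u - z₀‖² ≤ 2L²D²/σ`, the gap is at most `3L²D²/(σ A_K)`.
-/

open Finset
open scoped RealInnerProductSpace Gradient

section InnerProductSpace

variable {E : Type*} [NormedAddCommGroup E] [InnerProductSpace ℝ E]

-- Completing the square: a nearest point of `s` to `w + β⁻¹ • γ` maximises the model
-- `v ↦ ⟪γ, v - w⟫ - β / 2 * ‖v - w‖ ^ 2` over `s`.
theorem inner_sub_half_mul_sq_le_of_norm_le {β : ℝ} (hβ : 0 < β) {w γ m v : E}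
    (h : ‖w + β⁻¹ • γ - m‖ ≤ ‖w + β⁻¹ • γ - v‖) :
    ⟪γ, v - w⟫ - β / 2 * ‖v - w‖ ^ 2 ≤ ⟪γ, m - w⟫ - β / 2 * ‖m - w‖ ^ 2 := by
  have key (u : E) : ⟪γ, u - w⟫ - β / 2 * ‖u - w‖ ^ 2
      = ‖γ‖ ^ 2 / (2 * β) - β / 2 * ‖w + β⁻¹ • γ - u‖ ^ 2 := by
    rw [show w + β⁻¹ • γ - u = β⁻¹ • γ - (u - w) by abel, norm_sub_sq_real (β⁻¹ • γ), norm_smul,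
      real_inner_smul_left, Real.norm_of_nonneg (inv_nonneg.2 hβ.le)]
    field_simp
    ring
  rw [key, key]
  have := mul_le_mul_of_nonneg_left (pow_le_pow_left₀ (norm_nonneg _) h 2)
    (by positivity : 0 ≤ β / 2)
  linarith

theorem Convex.two_mul_mul_inner_le_of_norm_le {s : Set E} (hs : Convex ℝ s) {z γ m u : E}
    {η : ℝ} (hm : m ∈ s) (hmin : ∀ v ∈ s, ‖z + η • γ - m‖ ≤ ‖z + η • γ - v‖) (hu : u ∈ s) :
    2 * η * ⟪γ, u - m⟫ ≤ ‖u - z‖ ^ 2 - ‖u - m‖ ^ 2 - ‖m - z‖ ^ 2 := by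
  have : Nonempty s := ⟨⟨m, hm⟩⟩
  have hvi : ⟪z + η • γ - m, u - m⟫ ≤ 0 := by
    refine (norm_eq_iInf_iff_real_inner_le_zero hs hm).1 (le_antisymm ?_ ?_) u hu
    · exact le_ciInf fun v => hmin v v.2
    · exact ciInf_le ⟨0, Set.forall_mem_range.2 fun _ => norm_nonneg _⟩ (⟨m, hm⟩ : s)
  have hsq := norm_sub_sq_real (z - m) (u - m)
  rw [show z - m - (u - m) = -(u - z) by abel, norm_neg, norm_sub_rev z m] at hsq
  rw [show z + η • γ - m = (z - m) + η • γ by abel, inner_add_left, real_inner_smul_left] at hvi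
  linarith

variable [CompleteSpace E] {f : E → ℝ} {f' a b : E}

theorem HasGradientAt.hasDerivAt_comp_lineMap {t : ℝ}
    (hf : HasGradientAt f f' (AffineMap.lineMap a b t)) :
    HasDerivAt (fun s : ℝ => f (AffineMap.lineMap a b s)) ⟪f', b - a⟫ t :=
  ((hasGradientAt_iff_hasFDerivAt.1 hf).comp_hasDerivAt t
    AffineMap.hasDerivAt_lineMap).congr_deriv (by simp)

theorem ConvexOn.add_inner_le_of_hasGradientAt {s : Set E} (hf : ConvexOn ℝ s f)
    (hd : HasGradientAt f f' a) (ha : a ∈ s) (hb : b ∈ s) :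
    f a + ⟪f', b - a⟫ ≤ f b := by
  have hψ : ConvexOn ℝ (Set.Icc 0 1) fun t : ℝ => f (AffineMap.lineMap a b t) :=
    (hf.comp_affineMap _).subset (fun t ht => hf.1.lineMap_mem ha hb ht) (convex_Icc 0 1)
  have hderiv := HasGradientAt.hasDerivAt_comp_lineMap (b := b) (t := 0) (by simpa using hd)
  have := hψ.le_slope_of_hasDerivAt (by simp) (by simp) zero_lt_one hderiv
  rw [slope_def_field, AffineMap.lineMap_apply_one, AffineMap.lineMap_apply_zero, sub_zero,
    div_one] at this
  linarith

theorem ConcaveOn.le_add_inner_of_hasGradientAt {s : Set E} (hf : ConcaveOn ℝ s f)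
    (hd : HasGradientAt f f' a) (ha : a ∈ s) (hb : b ∈ s) :
    f b ≤ f a + ⟪f', b - a⟫ := by
  have hneg : HasGradientAt (-f) (-f') a :=
    hasGradientAt_iff_hasFDerivAt.2 (by simpa using (hasGradientAt_iff_hasFDerivAt.1 hd).neg)
  have := hf.neg.add_inner_le_of_hasGradientAt hneg ha hb
  simp only [Pi.neg_apply, inner_neg_left] at this
  linarith

theorem Differentiable.add_inner_gradient_sub_le {L : ℝ} (hf : Differentiable ℝ f)
    (hlip : ∀ u v, ‖∇ f u - ∇ f v‖ ≤ L * ‖u - v‖) (a b : E) :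
    f a + ⟪∇ f a, b - a⟫ - L / 2 * ‖b - a‖ ^ 2 ≤ f b := by
  set φ : ℝ → ℝ := fun t =>
    f (AffineMap.lineMap a b t) - t * ⟪∇ f a, b - a⟫ + L / 2 * t ^ 2 * ‖b - a‖ ^ 2
  have hφ' (t : ℝ) : HasDerivAt φ
      (⟪∇ f (AffineMap.lineMap a b t) - ∇ f a, b - a⟫ + L * t * ‖b - a‖ ^ 2) t := by
    have := ((HasGradientAt.hasDerivAt_comp_lineMap (a := a) (b := b) (hf _).hasGradientAt).sub
      ((hasDerivAt_id t).mul_const ⟪∇ f a, b - a⟫)).add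
      (((hasDerivAt_pow 2 t).const_mul (L / 2)).mul_const (‖b - a‖ ^ 2))
    exact this.congr_deriv (by rw [inner_sub_left]; ring)
  have hφ'_nonneg (t : ℝ) (ht : 0 ≤ t) :
      0 ≤ ⟪∇ f (AffineMap.lineMap a b t) - ∇ f a, b - a⟫ + L * t * ‖b - a‖ ^ 2 := by
    have hgrad : ‖∇ f (AffineMap.lineMap a b t) - ∇ f a‖ ≤ L * t * ‖b - a‖ := by
      have := hlip (AffineMap.lineMap a b t) a
      rwa [← vsub_eq_sub (AffineMap.lineMap a b t), AffineMap.lineMap_vsub_left, vsub_eq_sub,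
        norm_smul, Real.norm_of_nonneg ht, ← mul_assoc] at this
    have hcs := neg_le_of_abs_le
      (abs_real_inner_le_norm (∇ f (AffineMap.lineMap a b t) - ∇ f a) (b - a))
    have := mul_le_mul_of_nonneg_right hgrad (norm_nonneg (b - a))
    linarith
  have hmono : MonotoneOn φ (Set.Ici 0) := by
    refine monotoneOn_of_hasDerivWithinAt_nonneg (convex_Ici 0)
      (fun t _ => (hφ' t).continuousAt.continuousWithinAt)
      (fun t _ => (hφ' t).hasDerivWithinAt) fun t ht => hφ'_nonneg t ?_
    rw [interior_Ici] at ht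
    exact ht.le
  have := hmono (by simp) (by simp) zero_le_one
  simp only [φ, AffineMap.lineMap_apply_zero, AffineMap.lineMap_apply_one] at this
  linarith

theorem StrongConvexOn.bddBelow_range {m : ℝ} (hf : StrongConvexOn Set.univ m f) (hm : 0 < m)
    (hd : Differentiable ℝ f) : BddBelow (Set.range f) := by
  set φ : E → ℝ := fun x => f x - m / 2 * ‖x‖ ^ 2
  have hφd : Differentiable ℝ φ := hd.sub ((differentiable_id.norm_sq ℝ).const_mul _)
  set v := ∇ φ 0
  refine ⟨f 0 - ‖v‖ ^ 2 / (2 * m), ?_⟩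
  rintro _ ⟨x, rfl⟩
  have htangent := (strongConvexOn_iff_convex.1 hf).add_inner_le_of_hasGradientAt
    (hφd 0).hasGradientAt (Set.mem_univ 0) (Set.mem_univ x)
  simp only [φ, norm_zero, sub_zero] at htangent
  have hcs := neg_le_of_abs_le (abs_real_inner_le_norm v x)
  have hsq : m / 2 * ‖x‖ ^ 2 - ‖v‖ * ‖x‖ + ‖v‖ ^ 2 / (2 * m) = (m * ‖x‖ - ‖v‖) ^ 2 / (2 * m) := by
    field_simp
    ring
  have : 0 ≤ (m * ‖x‖ - ‖v‖) ^ 2 / (2 * m) := by positivity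
  linarith

theorem ConcaveOn.accelerated_projected_ascent_step {s : Set E} {G : E → ℝ}
    (hG : ConcaveOn ℝ s G) (hGd : Differentiable ℝ G) {L β τ η : ℝ}
    (hlip : ∀ u v, ‖∇ G u - ∇ G v‖ ≤ L * ‖u - v‖) (hβ : 0 < β) (hLβ : L ≤ β) (hη : 0 < η)
    (hτ₀ : 0 ≤ τ) (hτ₁ : τ ≤ 1) (hβτη : β * τ * η ≤ 1) {y z w y' z' u : E}
    (hy : y ∈ s) (hz : z ∈ s) (hz' : z' ∈ s) (hu : u ∈ s) (hw : w = (1 - τ) • y + τ • z)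
    (hyproj : ∀ v ∈ s, ‖w + β⁻¹ • ∇ G w - y'‖ ≤ ‖w + β⁻¹ • ∇ G w - v‖)
    (hzproj : ∀ v ∈ s, ‖z + η • ∇ G w - z'‖ ≤ ‖z + η • ∇ G w - v‖) :
    (1 - τ) * G y + τ * G u + τ / (2 * η) * (‖u - z'‖ ^ 2 - ‖u - z‖ ^ 2) ≤ G y' := by
  set γ := ∇ G w
  have hwmem : w ∈ s := hw ▸ hG.1 hy hz (by linarith) hτ₀ (by ring)
  have hγ : HasGradientAt G γ w := (hGd w).hasGradientAt
  have hdescent := hGd.add_inner_gradient_sub_le hlip w y'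
  -- Compare `y'` with the feasible point `v`, which lies within `τ * ‖z' - z‖` of `w`.
  set v := (1 - τ) • y + τ • z'
  have hmodel := inner_sub_half_mul_sq_le_of_norm_le hβ
    (hyproj v (hG.1 hy hz' (by linarith) hτ₀ (by ring)))
  have hinner : ⟪γ, v - w⟫ = (1 - τ) * ⟪γ, y - w⟫ + τ * (⟪γ, u - w⟫ - ⟪γ, u - z'⟫) := by
    rw [show v - w = (1 - τ) • (y - w) + τ • ((u - w) - (u - z')) by rw [hw]; module,
      inner_add_right, inner_smul_right, inner_smul_right, inner_sub_right γ (u - w)]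
  have hnorm : ‖v - w‖ ^ 2 = τ ^ 2 * ‖z' - z‖ ^ 2 := by
    rw [show v - w = τ • (z' - z) by rw [hw]; module, norm_smul, Real.norm_of_nonneg hτ₀]
    ring
  have hy_le := mul_le_mul_of_nonneg_left
    (hG.le_add_inner_of_hasGradientAt hγ hwmem hy) (sub_nonneg.2 hτ₁)
  have hu_le := mul_le_mul_of_nonneg_left (hG.le_add_inner_of_hasGradientAt hγ hwmem hu) hτ₀
  have hthree := mul_le_mul_of_nonneg_left
    (hG.1.two_mul_mul_inner_le_of_norm_le hz' hzproj hu) (by positivity : 0 ≤ τ / (2 * η))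
  have hcoef : 0 ≤ (τ / (2 * η) - β * τ ^ 2 / 2) * ‖z' - z‖ ^ 2 := by
    refine mul_nonneg ?_ (sq_nonneg _)
    rw [show τ / (2 * η) - β * τ ^ 2 / 2 = τ * (1 - β * τ * η) / (2 * η) by field_simp]
    exact div_nonneg (mul_nonneg hτ₀ (by linarith)) (by positivity)
  have hLβ' : L / 2 * ‖y' - w‖ ^ 2 ≤ β / 2 * ‖y' - w‖ ^ 2 := by gcongr
  rw [show τ / (2 * η) * (2 * η * ⟪γ, u - z'⟫) = τ * ⟪γ, u - z'⟫ by field_simp] at hthree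
  rw [hinner, hnorm] at hmodel
  linarith

theorem accelerated_projected_ascent_sum_le {s : Set E} {G : ℕ → E → ℝ}
    (hG : ∀ i, ConcaveOn ℝ s (G i)) (hGd : ∀ i, Differentiable ℝ (G i)) {L β : ℝ}
    (hlip : ∀ i u v, ‖∇ (G i) u - ∇ (G i) v‖ ≤ L * ‖u - v‖) (hβ : 0 < β) (hLβ : L ≤ β)
    {h : E → ℝ} {ε : ℕ → ℝ} (hh : ∀ i u, h u ≤ G i u) {y z w : ℕ → E}
    (hy : ∀ k, y k ∈ s) (hz : ∀ k, z k ∈ s)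
    (hw : ∀ k : ℕ, w k = (1 - 2 / ((k : ℝ) + 2)) • y k + (2 / ((k : ℝ) + 2)) • z k)
    (hinexact : ∀ k, G (k + 1) (y (k + 1)) ≤ h (y (k + 1)) + ε (k + 1))
    (hyproj : ∀ k, ∀ v ∈ s, ‖w k + β⁻¹ • ∇ (G (k + 1)) (w k) - y (k + 1)‖ ≤
      ‖w k + β⁻¹ • ∇ (G (k + 1)) (w k) - v‖)
    (hzproj : ∀ k : ℕ, ∀ v ∈ s,
      ‖z k + (((k : ℝ) + 1) / (2 * β)) • ∇ (G (k + 1)) (w k) - z (k + 1)‖ ≤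
        ‖z k + (((k : ℝ) + 1) / (2 * β)) • ∇ (G (k + 1)) (w k) - v‖)
    {u : E} (hu : u ∈ s) (N : ℕ) :
    ∑ i ∈ Icc 1 N, (i : ℝ) * G i u - β * ‖u - z 0‖ ^ 2
        - ∑ i ∈ Icc 1 N, (i : ℝ) * (i + 1) / 2 * ε i
      ≤ N * (N + 1) / 2 * h (y N) := by
  suffices key : ∀ N : ℕ, ∑ i ∈ Icc 1 N, (i : ℝ) * G i u - β * ‖u - z 0‖ ^ 2
      + β * ‖u - z N‖ ^ 2 - ∑ i ∈ Icc 1 N, (i : ℝ) * (i + 1) / 2 * ε i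
        ≤ N * (N + 1) / 2 * h (y N) by
    linarith [key N, mul_nonneg hβ.le (sq_nonneg ‖u - z N‖)]
  intro N
  induction N with
  | zero => simp
  | succ n ih =>
    have hn : (0 : ℝ) ≤ n := n.cast_nonneg
    have hstep := (hG (n + 1)).accelerated_projected_ascent_step (hGd (n + 1)) (hlip (n + 1))
      hβ hLβ (by positivity) (by positivity) (by rw [div_le_one (by positivity)]; linarith)
      (by field_simp; linarith) (hy n) (hz n) (hz (n + 1)) hu (hw n) (hyproj n) (hzproj n)
    have hscaled := mul_le_mul_of_nonneg_left hstep
      (by positivity : (0 : ℝ) ≤ ((n : ℝ) + 1) * (n + 2) / 2)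
    have hexpand : ((n : ℝ) + 1) * (n + 2) / 2 * ((1 - 2 / ((n : ℝ) + 2)) * G (n + 1) (y n)
        + 2 / ((n : ℝ) + 2) * G (n + 1) u + 2 / ((n : ℝ) + 2) / (2 * (((n : ℝ) + 1) / (2 * β)))
          * (‖u - z (n + 1)‖ ^ 2 - ‖u - z n‖ ^ 2))
        = n * (n + 1) / 2 * G (n + 1) (y n) + (n + 1) * G (n + 1) u
          + β * (‖u - z (n + 1)‖ ^ 2 - ‖u - z n‖ ^ 2) := by
      field_simp
      ring
    rw [hexpand] at hscaled
    have hdual := mul_le_mul_of_nonneg_left (hh (n + 1) (y n))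
      (by positivity : (0 : ℝ) ≤ n * (n + 1) / 2)
    have hinexact' := mul_le_mul_of_nonneg_left (hinexact n)
      (by positivity : (0 : ℝ) ≤ ((n : ℝ) + 1) * (n + 2) / 2)
    rw [sum_Icc_succ_top (by omega), sum_Icc_succ_top (by omega)]
    push_cast at ih ⊢
    linarith

end InnerProductSpace

theorem sum_Icc_natCast (K : ℕ) : ∑ i ∈ Icc 1 K, (i : ℝ) = K * (K + 1) / 2 := by
  induction K with
  | zero => simp
  | succ n ih =>
    rw [sum_Icc_succ_top (by omega), ih]
    push_cast
    ring

theorem ConvexOn.mul_map_smul_sum_Icc_le {E : Type*} [AddCommGroup E] [Module ℝ E] {s : Set E}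
    {f : E → ℝ} (hf : ConvexOn ℝ s f) {x : ℕ → E} {K : ℕ} (hK : 1 ≤ K)
    (hx : ∀ i ∈ Icc 1 K, x i ∈ s) :
    K * (K + 1) / 2 * f ((2 / ((K : ℝ) * (K + 1))) • ∑ i ∈ Icc 1 K, (i : ℝ) • x i)
      ≤ ∑ i ∈ Icc 1 K, i * f (x i) := by
  have hK0 : (0 : ℝ) < K * (K + 1) / 2 := by
    have : (1 : ℝ) ≤ K := by exact_mod_cast hK
    positivity
  have := hf.map_centerMass_le (t := Icc 1 K) (w := fun i => (i : ℝ)) (fun i _ => by positivity)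
    (by rw [sum_Icc_natCast]; exact hK0) hx
  rw [centerMass, centerMass, sum_Icc_natCast, inv_div, smul_eq_mul] at this
  simp only [Function.comp_apply, smul_eq_mul] at this
  rw [← le_div_iff₀' hK0, div_eq_inv_mul (∑ i ∈ Icc 1 K, _), inv_div]
  exact this

theorem sum_Icc_mul_le_of_eq_div_pow_three {a b : ℝ} (ha : 0 ≤ a) (hb : 0 < b) {ε : ℕ → ℝ}
    (hε : ∀ i : ℕ, 1 ≤ i → ε i = a / (b * (i : ℝ) ^ 3 * ((i : ℝ) + 1))) (N : ℕ) :
    ∑ i ∈ Icc 1 N, (i : ℝ) * (i + 1) / 2 * ε i ≤ a / b := by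
  have hterm : ∀ i ∈ Icc 1 N, (i : ℝ) * (i + 1) / 2 * ε i = a / (2 * b) * ((i : ℝ) ^ 2)⁻¹ := by
    intro i hi
    have : (0 : ℝ) < i := by exact_mod_cast (mem_Icc.1 hi).1
    rw [hε i (mem_Icc.1 hi).1]
    field_simp
  have hIoo : Ioo 0 (N + 1) = Icc 1 N := by ext; simp; omega
  have hsum : ∑ i ∈ Icc 1 N, ((i : ℝ) ^ 2)⁻¹ ≤ 2 := by
    simpa [hIoo] using sum_Ioo_inv_sq_le (α := ℝ) 0 (N + 1)
  rw [sum_congr rfl hterm, ← mul_sum]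
  calc a / (2 * b) * ∑ i ∈ Icc 1 N, ((i : ℝ) ^ 2)⁻¹ ≤ a / (2 * b) * 2 := by gcongr
    _ = a / b := by field_simp

theorem stmt_11_general {p q : ℕ} (Y : Set (EuclideanSpace ℝ (Fin q)))
    (D : ℝ) (hD : ∀ a ∈ Y, ∀ b ∈ Y, ‖a - b‖ ≤ D)
    (g : EuclideanSpace ℝ (Fin p) × EuclideanSpace ℝ (Fin q) → ℝ) (L σ : ℝ)
    (hσ : 0 < σ) (hσL : σ ≤ L)
    (hdx : ∀ y, Differentiable ℝ fun x => g (x, y))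
    (hdy : ∀ x, Differentiable ℝ fun y => g (x, y))
    (hsmooth : ∀ x y x' y',
      ‖gradient (fun z => g (z, y)) x - gradient (fun z => g (z, y')) x'‖ ≤
          L * (‖x - x'‖ + ‖y - y'‖) ∧
      ‖gradient (fun z => g (x, z)) y - gradient (fun z => g (x', z)) y'‖ ≤
          L * (‖x - x'‖ + ‖y - y'‖))
    (hsc : ∀ y, ConvexOn ℝ Set.univ fun x => g (x, y) - σ / 2 * ‖x‖ ^ 2)
    (hconc : ∀ x, ConcaveOn ℝ Y fun y => g (x, y))
    (β : ℝ) (hβ : β = 2 * L ^ 2 / σ)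
    (εstep : ℕ → ℝ)
    (hεdef : ∀ k : ℕ, 1 ≤ k → εstep k = L ^ 2 * D ^ 2 / (σ * (k : ℝ) ^ 3 * ((k : ℝ) + 1)))
    (x : ℕ → EuclideanSpace ℝ (Fin p)) (y z w : ℕ → EuclideanSpace ℝ (Fin q))
    (hy0 : y 0 ∈ Y) (hz0 : z 0 = y 0)
    (hw : ∀ k, w k = (1 - 2 / ((k : ℝ) + 2)) • y k + (2 / ((k : ℝ) + 2)) • z k)
    (hxstep : ∀ k, g (x (k + 1), y (k + 1)) ≤
        (⨅ x' : EuclideanSpace ℝ (Fin p), g (x', y (k + 1))) + εstep (k + 1))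
    (hymem : ∀ k, y (k + 1) ∈ Y)
    (hyproj : ∀ k, ∀ v ∈ Y,
      ‖w k + β⁻¹ • gradient (fun y' => g (x (k + 1), y')) (w k) - y (k + 1)‖ ≤
        ‖w k + β⁻¹ • gradient (fun y' => g (x (k + 1), y')) (w k) - v‖)
    (hzmem : ∀ k, z (k + 1) ∈ Y)
    (hzproj : ∀ k, ∀ v ∈ Y,
      ‖z k + (((k : ℝ) + 1) / (2 * β)) • gradient (fun y' => g (x (k + 1), y')) (w k)
          - z (k + 1)‖ ≤
        ‖z k + (((k : ℝ) + 1) / (2 * β)) • gradient (fun y' => g (x (k + 1), y')) (w k) - v‖)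
    (K : ℕ) (hK : 1 ≤ K)
    (xbar : EuclideanSpace ℝ (Fin p))
    (hxbar : xbar = (2 / ((K : ℝ) * ((K : ℝ) + 1))) • ∑ i ∈ Finset.Icc 1 K, (i : ℝ) • x i) :
    ∀ ytil ∈ Y, ∀ xtil : EuclideanSpace ℝ (Fin p),
      g (xbar, ytil) - g (xtil, y K) ≤
        6 * (L ^ 2 / σ) * D ^ 2 / ((K : ℝ) * ((K : ℝ) + 1)) := by
  intro ytil hytil xtil
  have hL : 0 < L := hσ.trans_le hσL
  have hβ₀ : 0 < β := by rw [hβ]; positivity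
  have hLβ : L ≤ β := by rw [hβ, le_div_iff₀ hσ]; nlinarith
  have hstrong (u) : StrongConvexOn Set.univ σ fun x' => g (x', u) :=
    strongConvexOn_iff_convex.2 (hsc u)
  have hbdd (u) : BddBelow (Set.range fun x' => g (x', u)) :=
    (hstrong u).bddBelow_range hσ (hdx u)
  have hyY : ∀ k, y k ∈ Y := fun | 0 => hy0 | k + 1 => hymem k
  have hzY : ∀ k, z k ∈ Y := fun | 0 => hz0 ▸ hy0 | k + 1 => hzmem k
  have hdual := accelerated_projected_ascent_sum_le (G := fun i y' => g (x i, y'))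
    (h := fun u => ⨅ x', g (x', u)) (fun i => hconc (x i)) (fun i => hdy (x i))
    (fun i u v => by simpa using (hsmooth (x i) u (x i) v).2) hβ₀ hLβ
    (fun i u => ciInf_le (hbdd u) (x i)) hyY hzY hw hxstep hyproj hzproj hytil K
  have hprimal := ((hstrong ytil).convexOn fun r => by positivity).mul_map_smul_sum_Icc_le hK
    (x := x) fun i _ => Set.mem_univ (x i)
  rw [← hxbar] at hprimal
  have herr := sum_Icc_mul_le_of_eq_div_pow_three (by positivity) hσ hεdef K
  have hinf : (⨅ x', g (x', y K)) ≤ g (xtil, y K) := ciInf_le (hbdd _) xtil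
  have hdiam : ‖ytil - z 0‖ ^ 2 ≤ D ^ 2 :=
    pow_le_pow_left₀ (norm_nonneg _) (hD _ hytil _ (hzY 0)) 2
  have hK₁ : (1 : ℝ) ≤ K := by exact_mod_cast hK
  have hβD : β * D ^ 2 = 2 * (L ^ 2 / σ) * D ^ 2 := by rw [hβ]; ring
  rw [le_div_iff₀ (by positivity)]
  linarith [mul_le_mul_of_nonneg_left hinf (by positivity : (0 : ℝ) ≤ K * (K + 1) / 2),
    mul_le_mul_of_nonneg_left hdiam hβ₀.le, show L ^ 2 * D ^ 2 / σ = L ^ 2 / σ * D ^ 2 by ring]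

/-- Theorem 1, specific tolerances: in the DIAG iteration, choosing
`ε_step^{(k)} = L²D_𝒴²/(σ k³(k+1))` yields a primal-dual gap of `(x̄_K, y_K)` of at most
`6(L²/σ)D_𝒴²/(K(K+1))`. -/
theorem stmt_11 {p q : ℕ} (Y : Set (EuclideanSpace ℝ (Fin q))) (hYne : Y.Nonempty)
    (hYcomp : IsCompact Y) (hYconv : Convex ℝ Y)
    (D : ℝ) (hD : ∀ a ∈ Y, ∀ b ∈ Y, ‖a - b‖ ≤ D)
    (g : EuclideanSpace ℝ (Fin p) × EuclideanSpace ℝ (Fin q) → ℝ) (L σ : ℝ)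
    (hσ : 0 < σ) (hσL : σ ≤ L)
    (hdx : ∀ y, Differentiable ℝ fun x => g (x, y))
    (hdy : ∀ x, Differentiable ℝ fun y => g (x, y))
    (hsmooth : ∀ x y x' y',
      ‖gradient (fun z => g (z, y)) x - gradient (fun z => g (z, y')) x'‖ ≤
          L * (‖x - x'‖ + ‖y - y'‖) ∧
      ‖gradient (fun z => g (x, z)) y - gradient (fun z => g (x', z)) y'‖ ≤
          L * (‖x - x'‖ + ‖y - y'‖))
    (hsc : ∀ y, ConvexOn ℝ Set.univ fun x => g (x, y) - σ / 2 * ‖x‖ ^ 2)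
    (hconc : ∀ x, ConcaveOn ℝ Y fun y => g (x, y))
    (β : ℝ) (hβ : β = 2 * L ^ 2 / σ)
    (εstep : ℕ → ℝ)
    (hεdef : ∀ k : ℕ, 1 ≤ k → εstep k = L ^ 2 * D ^ 2 / (σ * (k : ℝ) ^ 3 * ((k : ℝ) + 1)))
    (x : ℕ → EuclideanSpace ℝ (Fin p)) (y z w : ℕ → EuclideanSpace ℝ (Fin q))
    (hy0 : y 0 ∈ Y) (hz0 : z 0 = y 0)
    (hw : ∀ k, w k = (1 - 2 / ((k : ℝ) + 2)) • y k + (2 / ((k : ℝ) + 2)) • z k)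
    (hxstep : ∀ k, g (x (k + 1), y (k + 1)) ≤
        (⨅ x' : EuclideanSpace ℝ (Fin p), g (x', y (k + 1))) + εstep (k + 1))
    (hymem : ∀ k, y (k + 1) ∈ Y)
    (hyproj : ∀ k, ∀ v ∈ Y,
      ‖w k + β⁻¹ • gradient (fun y' => g (x (k + 1), y')) (w k) - y (k + 1)‖ ≤
        ‖w k + β⁻¹ • gradient (fun y' => g (x (k + 1), y')) (w k) - v‖)
    (hzmem : ∀ k, z (k + 1) ∈ Y)
    (hzproj : ∀ k, ∀ v ∈ Y,
      ‖z k + (((k : ℝ) + 1) / (2 * β)) • gradient (fun y' => g (x (k + 1), y')) (w k)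
          - z (k + 1)‖ ≤
        ‖z k + (((k : ℝ) + 1) / (2 * β)) • gradient (fun y' => g (x (k + 1), y')) (w k) - v‖)
    (K : ℕ) (hK : 1 ≤ K)
    (xbar : EuclideanSpace ℝ (Fin p))
    (hxbar : xbar = (2 / ((K : ℝ) * ((K : ℝ) + 1))) • ∑ i ∈ Finset.Icc 1 K, (i : ℝ) • x i) :
    ∀ ytil ∈ Y, ∀ xtil : EuclideanSpace ℝ (Fin p),
      g (xbar, ytil) - g (xtil, y K) ≤
        6 * (L ^ 2 / σ) * D ^ 2 / ((K : ℝ) * ((K : ℝ) + 1)) :=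
  stmt_11_general Y D hD g L σ hσ hσL hdx hdy hsmooth hsc hconc β hβ εstep hεdef x y z w hy0 hz0 hw
    hxstep hymem hyproj hzmem hzproj K hK xbar hxbar
end

section
/- Let f : ℝ^p → ℝ be L-weakly convex (i.e. x ↦ f(x) + (L/2)‖x‖² is convex) and continuous, let ε > 0, and set ε̃ = ε²/(64L). If a point x satisfies f(x) < f_{1/(2L)}(x) + ε̃, where f_{1/(2L)}(x) = min_{x'}[ f(x') + L‖x − x'‖² ] is the Moreau envelope with parameter 1/(2L), then ‖∇f_{1/(2L)}(x)‖ ≤ ε, i.e. x is an ε-first-order stationary point of f. -/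
/-!
Weak convexity makes the Moreau objective `x' ↦ f x' + L‖x - x'‖²` `L`-strongly convex; being
continuous and coercive it has a minimiser `z`, and the midpoint inequality gives
`f x ≥ f_{1/(2L)}(x) + (L/4)‖x - z‖²`, so `‖x - z‖ < ε / (4L)`. Freezing `z` in the infimum bounds the
envelope above by the quadratic `f_{1/(2L)}(x) + ⟪2L(x - z), y - x⟫ + L‖y - x‖²`, which touches it
at `x`; hence the gradient at `x` is `2L(x - z)`, or Lean's value `0` if the envelope is not
differentiable there.
-/

open Set Metric Filter InnerProductSpace

section NormedSpace

variable {E : Type*} [NormedAddCommGroup E] [NormedSpace ℝ E]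

theorem ConvexOn.sub_mul_norm_le {ψ : E → ℝ} {m : ℝ} (hψ : ConvexOn ℝ univ ψ)
    (hm : ∀ v ∈ closedBall (0 : E) 1, m ≤ ψ v) (v : E) : m - (ψ 0 - m) * ‖v‖ ≤ ψ v := by
  have hm0 : m ≤ ψ 0 := hm 0 (mem_closedBall_self zero_le_one)
  rcases le_or_gt ‖v‖ 1 with hv | hv
  · nlinarith [hm v (mem_closedBall_zero_iff.mpr hv), norm_nonneg v]
  have hv0 : 0 < ‖v‖ := one_pos.trans hv
  have hunit : ‖v‖⁻¹ • v ∈ closedBall (0 : E) 1 := by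
    rw [mem_closedBall_zero_iff, norm_smul, norm_inv, norm_norm, inv_mul_cancel₀ hv0.ne']
  have hseg : ψ (‖v‖⁻¹ • v) ≤ (1 - ‖v‖⁻¹) * ψ 0 + ‖v‖⁻¹ * ψ v := by
    simpa using hψ.2 (mem_univ 0) (mem_univ v) (sub_nonneg.mpr (inv_le_one_of_one_le₀ hv.le))
      (inv_nonneg.mpr hv0.le) (sub_add_cancel 1 _)
  have hscaled : ‖v‖ * m ≤ (‖v‖ - 1) * ψ 0 + ψ v :=
    calc ‖v‖ * m ≤ ‖v‖ * ((1 - ‖v‖⁻¹) * ψ 0 + ‖v‖⁻¹ * ψ v) := by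
          gcongr; exact (hm _ hunit).trans hseg
      _ = (‖v‖ - 1) * ψ 0 + ψ v := by field_simp
  nlinarith

theorem ConvexOn.exists_sub_mul_norm_le [ProperSpace E] {ψ : E → ℝ} (hψ : ConvexOn ℝ univ ψ)
    (hc : Continuous ψ) : ∃ a C : ℝ, ∀ v, a - C * ‖v‖ ≤ ψ v := by
  obtain ⟨v₀, -, hv₀⟩ := (isCompact_closedBall (0 : E) 1).exists_isMinOn
    ⟨0, mem_closedBall_self zero_le_one⟩ hc.continuousOn
  exact ⟨_, _, hψ.sub_mul_norm_le fun v hv => hv₀ hv⟩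

theorem StrongConvexOn.add_sq_norm_le_of_isMinOn {φ : E → ℝ} {m : ℝ} {z : E}
    (hφ : StrongConvexOn univ m φ) (hz : IsMinOn φ univ z) (y : E) :
    φ z + m / 4 * ‖y - z‖ ^ 2 ≤ φ y := by
  have hmid := hφ.2 (mem_univ y) (mem_univ z) (by norm_num : (0 : ℝ) ≤ 1 / 2)
    (by norm_num : (0 : ℝ) ≤ 1 / 2) (by norm_num)
  have := (hz (mem_univ _)).trans hmid
  simp only [smul_eq_mul] at this
  linarith

end NormedSpace

section InnerProductSpace

variable {E : Type*} [NormedAddCommGroup E] [InnerProductSpace ℝ E]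

theorem StrongConvexOn.tendsto_cocompact_atTop [ProperSpace E] {φ : E → ℝ} {m : ℝ}
    (hφ : StrongConvexOn univ m φ) (hm : 0 < m) (hc : Continuous φ) :
    Tendsto φ (cocompact E) atTop := by
  obtain ⟨a, C, hlin⟩ := (strongConvexOn_iff_convex.mp hφ).exists_sub_mul_norm_le
    (hc.sub (by fun_prop))
  have hquad : ∀ v, m / 4 * ‖v‖ ^ 2 + (a - C ^ 2 / m) ≤ φ v := fun v => by
    have hsq : 0 ≤ (m / 2 * ‖v‖ - C) ^ 2 / m := by positivity
    have : (m / 2 * ‖v‖ - C) ^ 2 / m = m / 4 * ‖v‖ ^ 2 - C * ‖v‖ + C ^ 2 / m := by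
      field_simp; ring
    linarith [hlin v]
  exact tendsto_atTop_mono hquad <| (tendsto_atTop_add_const_right _ _
    ((tendsto_pow_atTop two_ne_zero).const_mul_atTop (by positivity))).comp
    tendsto_norm_cocompact_atTop

theorem StrongConvexOn.exists_isMinOn [ProperSpace E] {φ : E → ℝ} {m : ℝ}
    (hφ : StrongConvexOn univ m φ) (hm : 0 < m) (hc : Continuous φ) : ∃ z, IsMinOn φ univ z := by
  obtain ⟨z, hz⟩ := hc.exists_forall_le (hφ.tendsto_cocompact_atTop hm hc)
  exact ⟨z, fun y _ => hz y⟩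

variable [CompleteSpace E]

theorem gradient_eq_of_le_add_inner_add_sq {g : E → ℝ} {x a : E} {c : ℝ}
    (hg : DifferentiableAt ℝ g x) (hle : ∀ u, g (x + u) ≤ g x + ⟪a, u⟫_ℝ + c * ‖u‖ ^ 2) :
    gradient g x = a := by
  set h : E → ℝ := fun u => g (x + u) - toDual ℝ E a u - c * ‖u‖ ^ 2
  have hmax : IsLocalMax h 0 := Eventually.of_forall fun u => by
    simp only [h, toDual_apply_apply, add_zero, inner_zero_right, norm_zero]
    linarith [hle u]
  have hd : HasFDerivAt h (toDual ℝ E (gradient g x) - toDual ℝ E a - c • (2 • innerSL ℝ 0)) 0 :=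
    (((hasFDerivAt_comp_add_left x).mpr (by simpa using hg.hasGradientAt.hasFDerivAt)).sub
      (toDual ℝ E a).hasFDerivAt).sub ((hasStrictFDerivAt_norm_sq 0).hasFDerivAt.const_mul c)
  have hcrit := hmax.hasFDerivAt_eq_zero hd
  rw [map_zero, smul_zero, smul_zero, sub_zero, sub_eq_zero] at hcrit
  exact (toDual ℝ E).injective hcrit

theorem norm_gradient_le_of_le_add_inner_add_sq {g : E → ℝ} {x a : E} {c : ℝ}
    (hle : ∀ u, g (x + u) ≤ g x + ⟪a, u⟫_ℝ + c * ‖u‖ ^ 2) : ‖gradient g x‖ ≤ ‖a‖ := by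
  by_cases hg : DifferentiableAt ℝ g x
  · rw [gradient_eq_of_le_add_inner_add_sq hg hle]
  · rw [gradient_eq_zero_of_not_differentiableAt hg, norm_zero]
    exact norm_nonneg a

end InnerProductSpace

section Moreau

variable {E : Type*} [NormedAddCommGroup E] {f : E → ℝ} {L : ℝ}

/-- `moreauEnvelope f L` is the envelope `f_{1/(2L)}` of the paper. -/
noncomputable def moreauEnvelope (f : E → ℝ) (L : ℝ) (y : E) : ℝ :=
  ⨅ x', f x' + L * ‖y - x'‖ ^ 2

theorem moreauEnvelope_eq_of_isMinOn {y z : E}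
    (hz : IsMinOn (fun x' => f x' + L * ‖y - x'‖ ^ 2) univ z) :
    moreauEnvelope f L y = f z + L * ‖y - z‖ ^ 2 :=
  le_antisymm (ciInf_le ⟨_, forall_mem_range.mpr fun x' => hz (mem_univ x')⟩ z)
    (le_ciInf fun x' => hz (mem_univ x'))

variable [InnerProductSpace ℝ E]

theorem strongConvexOn_moreau_objective (hwc : ConvexOn ℝ univ fun v => f v + L / 2 * ‖v‖ ^ 2)
    (y : E) : StrongConvexOn univ L fun x' => f x' + L * ‖y - x'‖ ^ 2 := by
  have hexpand : (fun x' => f x' + L * ‖y - x'‖ ^ 2 - L / 2 * ‖x'‖ ^ 2) =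
      fun x' => f x' + L / 2 * ‖x'‖ ^ 2 + ⟪-(2 * L) • y, x'⟫_ℝ + L * ‖y‖ ^ 2 := by
    funext x'
    rw [norm_sub_sq_real, real_inner_smul_left]
    ring
  rw [strongConvexOn_iff_convex, hexpand]
  exact (hwc.add ((innerₛₗ ℝ (-(2 * L) • y)).convexOn convex_univ)).add_const _

variable [ProperSpace E]

theorem exists_isMinOn_moreau_objective (hL : 0 < L)
    (hwc : ConvexOn ℝ univ fun v => f v + L / 2 * ‖v‖ ^ 2) (hcont : Continuous f) (y : E) :
    ∃ z, IsMinOn (fun x' => f x' + L * ‖y - x'‖ ^ 2) univ z :=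
  (strongConvexOn_moreau_objective hwc y).exists_isMinOn hL (by fun_prop)

theorem moreauEnvelope_le (hL : 0 < L) (hwc : ConvexOn ℝ univ fun v => f v + L / 2 * ‖v‖ ^ 2)
    (hcont : Continuous f) (y z : E) : moreauEnvelope f L y ≤ f z + L * ‖y - z‖ ^ 2 := by
  obtain ⟨w, hw⟩ := exists_isMinOn_moreau_objective hL hwc hcont y
  exact ciInf_le ⟨_, forall_mem_range.mpr fun x' => hw (mem_univ x')⟩ z

theorem moreauEnvelope_add_le (hL : 0 < L)
    (hwc : ConvexOn ℝ univ fun v => f v + L / 2 * ‖v‖ ^ 2) (hcont : Continuous f) {x z : E}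
    (hz : IsMinOn (fun x' => f x' + L * ‖x - x'‖ ^ 2) univ z) (u : E) :
    moreauEnvelope f L (x + u) ≤ moreauEnvelope f L x + ⟪(2 * L) • (x - z), u⟫_ℝ + L * ‖u‖ ^ 2 :=
  calc moreauEnvelope f L (x + u) ≤ f z + L * ‖(x - z) + u‖ ^ 2 := by
        rw [sub_add_eq_add_sub]; exact moreauEnvelope_le hL hwc hcont _ z
    _ = moreauEnvelope f L x + ⟪(2 * L) • (x - z), u⟫_ℝ + L * ‖u‖ ^ 2 := by
        rw [moreauEnvelope_eq_of_isMinOn hz, norm_add_sq_real, real_inner_smul_left]; ring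

end Moreau

/-- Case 2 of the proof of Theorem 2, abstract form: if `f` is
`L`-weakly convex and continuous, `ε > 0`, `ε̃ = ε²/(64L)`, and
`f(x) < f_{1/(2L)}(x) + ε̃` where `f_{1/(2L)}(x) = min_{x'} f(x') + L‖x − x'‖²`,
then `‖∇f_{1/(2L)}(x)‖ ≤ ε`, i.e. `x` is an `ε`-FOSP of `f`. -/
theorem stmt_12 {p : ℕ} (f : EuclideanSpace ℝ (Fin p) → ℝ) (L ε : ℝ)
    (hL : 0 < L) (hε : 0 < ε)
    (hwc : ConvexOn ℝ Set.univ fun v => f v + L / 2 * ‖v‖ ^ 2)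
    (hcont : Continuous f)
    (x : EuclideanSpace ℝ (Fin p))
    (hx : f x < (⨅ x' : EuclideanSpace ℝ (Fin p), f x' + L * ‖x - x'‖ ^ 2) + ε ^ 2 / (64 * L)) :
    ‖gradient (fun v => ⨅ x' : EuclideanSpace ℝ (Fin p), f x' + L * ‖v - x'‖ ^ 2) x‖ ≤ ε := by
  change f x < moreauEnvelope f L x + _ at hx
  change ‖gradient (moreauEnvelope f L) x‖ ≤ ε
  obtain ⟨z, hz⟩ := exists_isMinOn_moreau_objective hL hwc hcont x
  have hgap := (strongConvexOn_moreau_objective hwc x).add_sq_norm_le_of_isMinOn hz x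
  rw [sub_self, norm_zero, ← moreauEnvelope_eq_of_isMinOn hz] at hgap
  have hgrad := norm_gradient_le_of_le_add_inner_add_sq (moreauEnvelope_add_le hL hwc hcont hz)
  rw [norm_smul, Real.norm_of_nonneg (by positivity)] at hgrad
  refine hgrad.trans ((pow_le_pow_iff_left₀ (by positivity) hε.le two_ne_zero).mp ?_)
  have hdist : L * (L / 4 * ‖x - z‖ ^ 2) ≤ L * (ε ^ 2 / (64 * L)) := by gcongr; linarith
  calc (2 * L * ‖x - z‖) ^ 2 = 16 * (L * (L / 4 * ‖x - z‖ ^ 2)) := by ring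
    _ ≤ 16 * (L * (ε ^ 2 / (64 * L))) := by gcongr
    _ = ε ^ 2 / 4 := by field_simp; ring
    _ ≤ ε ^ 2 := by linarith [sq_nonneg ε]
end

section
/- Let f : ℝ^p → ℝ be L-weakly convex (i.e. x ↦ f(x) + (L/2)‖x‖² is convex) and continuous, let ε̃ > 0, and suppose x_k satisfies f(x_k) < min_{x'}[ f(x') + L‖x_k − x'‖² ] + ε̃. Then for every x̃ ∈ ℝ^p with ‖x̃ − x_k‖ ≥ 4√(ε̃/L), one has f(x̃) + L‖x̃ − x_k‖² ≥ f(x_k) + ε̃. Consequently, the minimum of x' ↦ f(x') + L‖x_k − x'‖² is attained inside the ball {x' : ‖x' − x_k‖ ≤ 4√(ε̃/L)}. -/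
/-!
For `L`-weakly convex `f`, the function `φ v = f v + L‖x_k - v‖²` is `L`-strongly convex. Such a
function is bounded below (a convex function bounded on a ball decreases at most linearly, which
the quadratic term beats), so its infimum is a genuine one. At the midpoint `y` of `x_k` and `x̃`,
strong convexity gives `inf φ ≤ φ y ≤ (φ x_k + φ x̃)/2 - L‖x̃ - x_k‖²/8`; since `φ x_k = f x_k` is
within `ε̃` of the infimum, `φ x̃ ≥ f x_k + ε̃` once `L‖x̃ - x_k‖² ≥ 12 ε̃`. Hence every minimizer of
`φ` over the compact ball of radius `4√(ε̃/L)` is a global one.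
-/

open Set Metric

section Convex

variable {E : Type*} [NormedAddCommGroup E] [NormedSpace ℝ E]

theorem ConvexOn.sub_mul_norm_sub_le {h : E → ℝ} (hh : ConvexOn ℝ univ h) {x : E} {c : ℝ}
    (hc : ∀ y ∈ closedBall x 1, c ≤ h y) (z : E) : c - (h x - c) * ‖z - x‖ ≤ h z := by
  have hcx : c ≤ h x := hc x (mem_closedBall_self zero_le_one)
  set s := ‖z - x‖ with hs
  rcases le_or_gt s 1 with hs1 | hs1
  · have : c ≤ h z := hc z (by rwa [mem_closedBall, dist_eq_norm])
    nlinarith [norm_nonneg (z - x)]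
  · have hs0 : 0 < s := zero_lt_one.trans hs1
    have hw : (1 - s⁻¹) • x + s⁻¹ • z ∈ closedBall x 1 := by
      rw [mem_closedBall, dist_eq_norm,
        show (1 - s⁻¹) • x + s⁻¹ • z - x = s⁻¹ • (z - x) by module, norm_smul,
        Real.norm_of_nonneg (inv_nonneg.2 hs0.le), ← hs, inv_mul_cancel₀ hs0.ne']
    have hconv := hh.2 (mem_univ x) (mem_univ z) (sub_nonneg.2 (inv_le_one_of_one_le₀ hs1.le))
      (inv_nonneg.2 hs0.le) (sub_add_cancel 1 s⁻¹)
    have key : s * c ≤ (s - 1) * h x + h z := by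
      calc s * c ≤ s * h ((1 - s⁻¹) • x + s⁻¹ • z) := by gcongr; exact hc _ hw
        _ ≤ s * ((1 - s⁻¹) • h x + s⁻¹ • h z) := by gcongr
        _ = (s - 1) * h x + h z := by simp only [smul_eq_mul]; field_simp
    nlinarith

end Convex

section Strong

variable {E : Type*} [NormedAddCommGroup E] [InnerProductSpace ℝ E]

theorem ConvexOn.strongConvexOn_add_mul_norm_sub_sq {f : E → ℝ} {L : ℝ}
    (hf : ConvexOn ℝ univ fun v => f v + L / 2 * ‖v‖ ^ 2) (x : E) :
    StrongConvexOn univ L fun v => f v + L * ‖x - v‖ ^ 2 := by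
  rw [strongConvexOn_iff_convex]
  have hlin : ConvexOn ℝ univ fun v : E => L * ‖x‖ ^ 2 + innerₛₗ ℝ (-(2 * L) • x) v :=
    (convexOn_const _ convex_univ).add (LinearMap.convexOn _ convex_univ)
  refine (hf.add hlin).congr fun v _ => ?_
  simp only [Pi.add_apply, innerₛₗ_apply_apply, real_inner_smul_left, norm_sub_sq_real]
  ring

theorem StrongConvexOn.bddBelow_range_s14 [ProperSpace E] {φ : E → ℝ} {m : ℝ}
    (hφ : StrongConvexOn univ m φ) (hm : 0 < m) (hcont : Continuous φ) :
    BddBelow (range φ) := by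
  set h : E → ℝ := fun v => φ v - m / 2 * ‖v‖ ^ 2
  have hh : ConvexOn ℝ univ h := strongConvexOn_iff_convex.1 hφ
  obtain ⟨c, hc⟩ : BddBelow (h '' closedBall 0 1) :=
    (isCompact_closedBall 0 1).bddBelow_image (by fun_prop)
  refine ⟨c - (h 0 - c) ^ 2 / (2 * m), ?_⟩
  rintro _ ⟨z, rfl⟩
  have hlow := hh.sub_mul_norm_sub_le (fun y hy => hc (mem_image_of_mem h hy)) z
  rw [sub_zero] at hlow
  have hsq : (h 0 - c) ^ 2 / (2 * m) + m / 2 * ‖z‖ ^ 2 ≥ (h 0 - c) * ‖z‖ := by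
    rw [ge_iff_le, ← sub_nonneg]
    have : (h 0 - c) ^ 2 / (2 * m) + m / 2 * ‖z‖ ^ 2 - (h 0 - c) * ‖z‖
        = (h 0 - c - m * ‖z‖) ^ 2 / (2 * m) := by field_simp; ring
    rw [this]; positivity
  simp only [h] at hlow hsq ⊢
  linarith

theorem StrongConvexOn.add_le_of_lt_iInf_add {φ : E → ℝ} {m ε : ℝ}
    (hφ : StrongConvexOn univ m φ) (hB : BddBelow (range φ)) {x : E}
    (hx : φ x < (⨅ y, φ y) + ε) {z : E} (hz : 12 * ε ≤ m * ‖z - x‖ ^ 2) :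
    φ x + ε ≤ φ z := by
  have hmid := hφ.2 (mem_univ x) (mem_univ z) (by norm_num : (0 : ℝ) ≤ 1 / 2)
    (by norm_num : (0 : ℝ) ≤ 1 / 2) (by norm_num)
  have hinf : (⨅ y, φ y) ≤ φ ((1 / 2 : ℝ) • x + (1 / 2 : ℝ) • z) := ciInf_le hB _
  rw [norm_sub_rev] at hz
  simp only [smul_eq_mul] at hmid
  nlinarith

end Strong

theorem Continuous.exists_mem_closedBall_forall_le {X : Type*} [PseudoMetricSpace X]
    [ProperSpace X] {φ : X → ℝ} (hφ : Continuous φ) {x : X} {R : ℝ} (hR : 0 ≤ R)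
    (hfar : ∀ z, R < dist z x → φ x ≤ φ z) : ∃ x' ∈ closedBall x R, ∀ z, φ x' ≤ φ z := by
  obtain ⟨x', hx', hmin⟩ := (isCompact_closedBall x R).exists_isMinOn
    ⟨x, mem_closedBall_self hR⟩ hφ.continuousOn
  refine ⟨x', hx', fun z => ?_⟩
  rcases le_or_gt (dist z x) R with hz | hz
  · exact hmin hz
  · exact (hmin (mem_closedBall_self hR)).trans (hfar z hz)

theorem sixteen_mul_le_mul_sq_of_four_mul_sqrt_div_le {ε L r : ℝ} (hL : 0 < L) (hε : 0 ≤ ε)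
    (h : 4 * √(ε / L) ≤ r) : 16 * ε ≤ L * r ^ 2 := by
  have hsq := pow_le_pow_left₀ (by positivity) h 2
  rw [mul_pow, Real.sq_sqrt (by positivity)] at hsq
  rw [← div_le_iff₀' hL]
  linarith [show 16 * ε / L = 4 ^ 2 * (ε / L) by ring]

/-- Eq. (15) in the paper: if `f` is `L`-weakly convex and continuous,
`ε̃ > 0`, and `f(x_k) < min_{x'}[f(x') + L‖x_k − x'‖²] + ε̃`, then every `x̃` with
`‖x̃ − x_k‖ ≥ 4√(ε̃/L)` satisfies `f(x̃) + L‖x̃ − x_k‖² ≥ f(x_k) + ε̃`; consequently the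
minimum of `x' ↦ f(x') + L‖x_k − x'‖²` is attained inside the ball of radius `4√(ε̃/L)`
around `x_k`. -/
theorem stmt_14 {p : ℕ} (f : EuclideanSpace ℝ (Fin p) → ℝ) (L εt : ℝ)
    (hL : 0 < L) (hεt : 0 < εt)
    (hwc : ConvexOn ℝ Set.univ fun v => f v + L / 2 * ‖v‖ ^ 2)
    (hcont : Continuous f)
    (xk : EuclideanSpace ℝ (Fin p))
    (hx : f xk < (⨅ x' : EuclideanSpace ℝ (Fin p), f x' + L * ‖xk - x'‖ ^ 2) + εt) :
    (∀ xtil : EuclideanSpace ℝ (Fin p), 4 * Real.sqrt (εt / L) ≤ ‖xtil - xk‖ →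
        f xk + εt ≤ f xtil + L * ‖xtil - xk‖ ^ 2) ∧
    (∃ x' : EuclideanSpace ℝ (Fin p), ‖x' - xk‖ ≤ 4 * Real.sqrt (εt / L) ∧
        ∀ z, f x' + L * ‖xk - x'‖ ^ 2 ≤ f z + L * ‖xk - z‖ ^ 2) := by
  set φ := fun v => f v + L * ‖xk - v‖ ^ 2
  have hφ : StrongConvexOn univ L φ := hwc.strongConvexOn_add_mul_norm_sub_sq xk
  have hφcont : Continuous φ := by fun_prop
  have hφxk : φ xk = f xk := by simp [φ]
  have hfar : ∀ z, 4 * √(εt / L) ≤ ‖z - xk‖ → φ xk + εt ≤ φ z := fun z hz =>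
    hφ.add_le_of_lt_iInf_add (hφ.bddBelow_range_s14 hL hφcont) (hφxk ▸ hx) <| by
      linarith [sixteen_mul_le_mul_sq_of_four_mul_sqrt_div_le hL hεt.le hz]
  refine ⟨fun z hz => ?_, ?_⟩
  · simpa only [φ, hφxk, norm_sub_rev xk z] using hfar z hz
  · obtain ⟨x', hx', hmin⟩ := hφcont.exists_mem_closedBall_forall_le (x := xk)
      (R := 4 * √(εt / L)) (by positivity)
      fun z hz => by linarith [hfar z (dist_eq_norm z xk ▸ hz.le)]
    exact ⟨x', dist_eq_norm x' xk ▸ hx', hmin⟩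
end
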